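/- Let A be an n×n Hermitian matrix, β > 0, and z a stationary point of f on the complex unit sphere with multiplier λ and H = A + 2β diag(|z|²) − 2λ I. Then for every y ∈ ℂⁿ with ‖y‖₂ = 1, f(y) − f(z) = (1/2) y* H y + (β/2) Σ_{k=1}^n (|y_k|² − |z_k|²)². -/
import Mathlib
open Matrix Finset
theorem stmt2 {n : ℕ} (A : Matrix (Fin n) (Fin n) ℂ) (hA : A.IsHermitian)
    (β : ℝ) (hβ : 0 < β) (z : Fin n → ℂ) (hz : ∑ k, ‖z k‖ ^ 2 = 1)
    (lam : ℝ)
    (hlam : lam = (1 / 2) * (star z ⬝ᵥ A.mulVec z).re + β * ∑ k, ‖z k‖ ^ 4)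
    (hstat : ∀ k, A.mulVec z k + ((2 * β * ‖z k‖ ^ 2 : ℝ) : ℂ) * z k
      = ((2 * lam : ℝ) : ℂ) * z k)
    (H : Matrix (Fin n) (Fin n) ℂ)
    (hH : H = A + (2 * β) • Matrix.diagonal (fun k => ((‖z k‖ ^ 2 : ℝ) : ℂ))
        - (2 * lam) • (1 : Matrix (Fin n) (Fin n) ℂ)) :
    ∀ y : Fin n → ℂ, ∑ k, ‖y k‖ ^ 2 = 1 →
      ((1 / 2) * (star y ⬝ᵥ A.mulVec y).re + (β / 2) * ∑ k, ‖y k‖ ^ 4)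
      - ((1 / 2) * (star z ⬝ᵥ A.mulVec z).re + (β / 2) * ∑ k, ‖z k‖ ^ 4)
      = (1 / 2) * (star y ⬝ᵥ H.mulVec y).re
        + (β / 2) * ∑ k, (‖y k‖ ^ 2 - ‖z k‖ ^ 2) ^ 2 := by
  intro y hy
  have hdiag : (star y ⬝ᵥ (Matrix.diagonal (fun k => ((‖z k‖ ^ 2 : ℝ) : ℂ))).mulVec y).re
      = ∑ k, ‖z k‖ ^ 2 * ‖y k‖ ^ 2 := by
    simp only [dotProduct, Matrix.mulVec_diagonal, Complex.re_sum, Pi.star_apply]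
    refine Finset.sum_congr rfl fun k _ => ?_
    rw [mul_left_comm, Complex.star_def, Complex.conj_mul', ← Complex.ofReal_pow,
      ← Complex.ofReal_mul, Complex.ofReal_re]
  have hyy : (star y ⬝ᵥ y).re = 1 := by
    simp only [dotProduct, Complex.re_sum, Pi.star_apply]
    rw [← hy]
    refine Finset.sum_congr rfl fun k _ => ?_
    rw [Complex.star_def, Complex.conj_mul', ← Complex.ofReal_pow, Complex.ofReal_re]
  have hH' : (star y ⬝ᵥ H.mulVec y).re
      = (star y ⬝ᵥ A.mulVec y).re + 2 * β * (∑ k, ‖z k‖ ^ 2 * ‖y k‖ ^ 2) - 2 * lam := by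
    subst hH
    rw [Matrix.sub_mulVec, Matrix.add_mulVec, Matrix.smul_mulVec,
      Matrix.smul_mulVec, Matrix.one_mulVec, dotProduct_sub, dotProduct_add,
      dotProduct_smul, dotProduct_smul, Complex.sub_re, Complex.add_re,
      Complex.smul_re, Complex.smul_re, hdiag, hyy]
    simp only [smul_eq_mul]
    ring
  have hexp : ∑ k, (‖y k‖ ^ 2 - ‖z k‖ ^ 2) ^ 2
      = ∑ k, ‖y k‖ ^ 4 - 2 * ∑ k, (‖z k‖ ^ 2 * ‖y k‖ ^ 2) + ∑ k, ‖z k‖ ^ 4 := by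
    rw [Finset.sum_congr rfl fun k _ =>
      (by ring : (‖y k‖ ^ 2 - ‖z k‖ ^ 2) ^ 2
        = ‖y k‖ ^ 4 - 2 * (‖z k‖ ^ 2 * ‖y k‖ ^ 2) + ‖z k‖ ^ 4)]
    rw [Finset.sum_add_distrib, Finset.sum_sub_distrib, ← Finset.mul_sum]
  rw [hH', hexp, hlam]
  ring
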